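/- arXiv:2104.06532 — 4 statements merged into one kernel-verified Lean document; each statement's English description precedes it below -/
import Mathlib

section
/- As N → ∞, the quantity (1/2)·(N² + N − N(N−1)·cos(2·arctan(1/√(N−2)))^(N−2)) divided by N² converges to (e²−1)/(2e²). -/
/-!
With `x = N - 2`, the double-angle formula gives `cos (2 * arctan (1 / √x)) = (x - 1) / (x + 1)`,
and `((x - 1) / (x + 1)) ^ x = (1 - 1/x) ^ x / (1 + 1/x) ^ x → e⁻¹ / e = e⁻²`.
Dividing the QFI by `N²` leaves `(1 + 1/N - (1 - 1/N) c_N) / 2` with `c_N → e⁻²`.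
-/

open Real Filter Topology

theorem cos_two_mul_arctan (y : ℝ) : cos (2 * arctan y) = (1 - y ^ 2) / (1 + y ^ 2) := by
  have : (1 + y ^ 2) ≠ 0 := by positivity
  rw [cos_two_mul, cos_sq_arctan]
  field_simp
  ring

theorem cos_two_mul_arctan_one_div_sqrt {x : ℝ} (hx : 0 < x) :
    cos (2 * arctan (1 / √x)) = (x - 1) / (x + 1) := by
  rw [cos_two_mul_arctan, div_pow, one_pow, sq_sqrt hx.le]
  field_simp

theorem tendsto_sub_one_div_add_one_pow :
    Tendsto (fun m : ℕ => (((m : ℝ) - 1) / ((m : ℝ) + 1)) ^ m) atTop (𝓝 (exp (-2))) := by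
  have hlim := (tendsto_one_add_div_pow_exp (-1)).div (tendsto_one_add_div_pow_exp 1)
    (exp_pos 1).ne'
  rw [← exp_sub, show (-1 : ℝ) - 1 = -2 by norm_num] at hlim
  refine hlim.congr' ?_
  filter_upwards [eventually_ge_atTop 1] with m hm
  have hm : (1 : ℝ) ≤ m := by exact_mod_cast hm
  rw [Pi.div_apply, ← div_pow]
  congr 1
  field_simp
  ring

theorem tendsto_half_sq_add_sub_mul_div_sq {c : ℕ → ℝ} {L : ℝ}
    (hc : Tendsto c atTop (𝓝 L)) :
    Tendsto (fun N : ℕ => (1 / 2 * ((N : ℝ) ^ 2 + N - N * (N - 1) * c N)) / (N : ℝ) ^ 2)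
      atTop (𝓝 ((1 - L) / 2)) := by
  have hinv := tendsto_inv_atTop_nhds_zero_nat (𝕜 := ℝ)
  have hlim := (((tendsto_const_nhds (x := (1 : ℝ))).add hinv).sub
    (((tendsto_const_nhds (x := (1 : ℝ))).sub hinv).mul hc)).div_const 2
  simp only [add_zero, sub_zero, one_mul] at hlim
  refine hlim.congr' ?_
  filter_upwards [eventually_ne_atTop 0] with N hN
  have hN : (N : ℝ) ≠ 0 := by exact_mod_cast hN
  field_simp

/-- The QFI (1/2)(N² + N − N(N−1)cos^{N−2}(2 arctan(1/√(N−2)))) divided by N²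
converges to (e²−1)/(2e²). -/
theorem stmt_2 :
    Tendsto (fun N : ℕ =>
        (1 / 2 * ((N : ℝ) ^ 2 + (N : ℝ) -
          (N : ℝ) * ((N : ℝ) - 1) *
            Real.cos (2 * arctan (1 / Real.sqrt ((N : ℝ) - 2))) ^ (N - 2))) / (N : ℝ) ^ 2)
      atTop (nhds ((Real.exp 1 ^ 2 - 1) / (2 * Real.exp 1 ^ 2))) := by
  have hcos : Tendsto (fun N : ℕ => cos (2 * arctan (1 / √((N : ℝ) - 2))) ^ (N - 2)) atTop
      (𝓝 (exp (-2))) := by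
    refine (tendsto_sub_one_div_add_one_pow.comp (tendsto_sub_atTop_nat 2)).congr' ?_
    filter_upwards [eventually_ge_atTop 3] with N hN
    have hN : (3 : ℝ) ≤ N := by exact_mod_cast hN
    rw [Function.comp_apply, Nat.cast_sub (by omega), Nat.cast_two,
      cos_two_mul_arctan_one_div_sqrt (by linarith)]
  have hval : (1 - exp (-2)) / 2 = (exp 1 ^ 2 - 1) / (2 * exp 1 ^ 2) := by
    have hsq : exp 1 ^ 2 = exp 2 := by rw [← exp_nat_mul]; norm_num
    rw [exp_neg, hsq]
    field_simp
  rw [← hval]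
  exact tendsto_half_sq_add_sub_mul_div_sq hcos
end

section
/- Define f(N, x) = 2N(N−1)² sin²(x) cos^{2N−4}(x) / (N²(1 − cos^{N−2}(2x)) + N(1 + cos^{N−2}(2x))) for N ≥ 3 and x ∈ ℝ. Then f(N, arctan(1/√(N−2))) converges to 2/(e − e^{−1}) as N → ∞. -/
open Real Filter Set

/-- Ratio of reciprocal QFI to method-of-moments error of the twist-untwist protocol. -/
noncomputable def f (N : ℕ) (x : ℝ) : ℝ :=
  (2 * (N : ℝ) * ((N : ℝ) - 1) ^ 2 * Real.sin x ^ 2 * Real.cos x ^ (2 * N - 4)) /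
    ((N : ℝ) ^ 2 * (1 - Real.cos (2 * x) ^ (N - 2)) +
      (N : ℝ) * (1 + Real.cos (2 * x) ^ (N - 2)))

open scoped Topology

/-!
At `x_N = arctan (1 / √(N - 2))` one has `cos² x_N = (N - 2) / (N - 1)`, so the two powers in `f`
are `cos^(2N-4) x_N = (1 - 1/(N - 1))^(N - 2) → e⁻¹` and
`cos^(N-2) (2 x_N) = (1 - 2/(N - 1))^(N - 2) → e⁻²`. Dividing numerator and denominator by `N²`,
`f N x_N → 2 e⁻¹ / (1 - e⁻²) = 2 / (e - e⁻¹)`.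
-/

lemma tendsto_one_add_div_succ_pow_exp (c : ℝ) :
    Tendsto (fun n : ℕ => (1 + c / ((n : ℝ) + 1)) ^ n) atTop (𝓝 (exp c)) := by
  refine tendsto_one_add_pow_exp_of_tendsto ?_
  simpa [mul_div_left_comm] using (tendsto_natCast_div_add_atTop (1 : ℝ)).const_mul c

lemma tendsto_one_add_div_sub_one_pow_sub_two_exp (c : ℝ) :
    Tendsto (fun N : ℕ => (1 + c / ((N : ℝ) - 1)) ^ (N - 2)) atTop (𝓝 (exp c)) := by
  refine ((tendsto_one_add_div_succ_pow_exp c).comp (tendsto_sub_atTop_nat 2)).congr' ?_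
  filter_upwards [eventually_ge_atTop 2] with N hN
  simp only [Function.comp, Nat.cast_sub hN]
  ring_nf

lemma f_eq_of_cos_sq (N : ℕ) {x c : ℝ} (hc : cos x ^ 2 = c) :
    f N x = 2 * N * (N - 1) ^ 2 * (1 - c) * c ^ (N - 2) /
      (N ^ 2 * (1 - (2 * c - 1) ^ (N - 2)) + N * (1 + (2 * c - 1) ^ (N - 2))) := by
  have hpow : cos x ^ (2 * N - 4) = c ^ (N - 2) := by
    rw [show 2 * N - 4 = 2 * (N - 2) by omega, pow_mul, hc]
  rw [f, sin_sq, cos_two_mul, hc, hpow]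

lemma cos_sq_arctan_one_div_sqrt {m : ℝ} (hm : 0 < m) :
    cos (arctan (1 / √m)) ^ 2 = m / (m + 1) := by
  rw [cos_sq_arctan, div_pow, one_pow, sq_sqrt hm.le]
  field_simp

lemma f_arctan_one_div_sqrt {N : ℕ} (hN : 3 ≤ N) :
    f N (arctan (1 / √((N : ℝ) - 2))) =
      2 * (1 - 1 / N) * (1 + -1 / ((N : ℝ) - 1)) ^ (N - 2) /
        ((1 - (1 + -2 / ((N : ℝ) - 1)) ^ (N - 2)) +
          (1 + (1 + -2 / ((N : ℝ) - 1)) ^ (N - 2)) * (1 / N)) := by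
  have hN' : (3 : ℝ) ≤ N := by exact_mod_cast hN
  have hN0 : (N : ℝ) ≠ 0 := by positivity
  have hN1 : (N : ℝ) - 1 ≠ 0 := by linarith
  rw [f_eq_of_cos_sq N (cos_sq_arctan_one_div_sqrt (by linarith : (0 : ℝ) < N - 2)),
    show (N : ℝ) - 2 + 1 = N - 1 by ring,
    ← mul_div_mul_right _ _ (inv_ne_zero (pow_ne_zero 2 hN0))]
  have h1 : 1 + -1 / ((N : ℝ) - 1) = (N - 2) / (N - 1) := by field_simp; ring
  have h2 : 1 + -2 / ((N : ℝ) - 1) = 2 * ((N - 2) / (N - 1)) - 1 := by field_simp; ring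
  rw [h1, h2]
  congr 1
  · field_simp; ring
  · field_simp

lemma two_mul_exp_neg_one_div_one_sub_exp_neg_two :
    2 * exp (-1) / (1 - exp (-2)) = 2 / (exp 1 - (exp 1)⁻¹) := by
  have he : exp (-2) = (exp 1)⁻¹ * (exp 1)⁻¹ := by rw [← exp_neg, ← exp_add]; norm_num
  rw [he, exp_neg]
  field_simp

/-- f(N, arctan(1/√(N−2))) → 2/(e − e⁻¹) as N → ∞. -/
theorem stmt_3 :
    Tendsto (fun N : ℕ => f N (arctan (1 / Real.sqrt ((N : ℝ) - 2))))
      atTop (nhds (2 / (Real.exp 1 - (Real.exp 1)⁻¹))) := by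
  have hexp₁ := tendsto_one_add_div_sub_one_pow_sub_two_exp (-1)
  have hexp₂ := tendsto_one_add_div_sub_one_pow_sub_two_exp (-2)
  have hinv : Tendsto (fun N : ℕ => 1 / (N : ℝ)) atTop (𝓝 0) :=
    tendsto_one_div_atTop_nhds_zero_nat
  have hone : Tendsto (fun _ : ℕ => (1 : ℝ)) atTop (𝓝 1) := tendsto_const_nhds
  have hlim := (((hone.sub hinv).const_mul 2).mul hexp₁).div
    ((hone.sub hexp₂).add ((hone.add hexp₂).mul hinv)) (by
      rw [mul_zero, add_zero, sub_ne_zero]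
      exact (exp_lt_one_iff.mpr (by norm_num : (-2 : ℝ) < 0)).ne')
  rw [sub_zero, mul_one, mul_zero, add_zero, two_mul_exp_neg_one_div_one_sub_exp_neg_two] at hlim
  refine hlim.congr' ?_
  filter_upwards [eventually_ge_atTop 3] with N hN
  exact (f_arctan_one_div_sqrt hN).symm
end

section
/- For every N ≥ 3 and every x with 0 < x < π/2, f(N, x) = 2N(N−1)² sin²(x) cos^{2N−4}(x) / (N²(1 − cos^{N−2}(2x)) + N(1 + cos^{N−2}(2x))) satisfies f(N, x) ≤ 1. -/
open Real Set

/-!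
With `m = N - 2` and `u = sin² x`, cancelling the common factor `N` turns `f N x ≤ 1` into
`2 (m+1)² u (1-u)^m ≤ 2 + (m+1) (1 - (1-2u)^m)`. Replacing `u` by `1 - q` with
`q = max u (1-u)` only increases the left side and, since `|1 - 2u| ≤ q²`, only decreases the
right side, so it suffices to show `2 (m+1)² (1-q) q^m ≤ 2 + (m+1) (1 - q^(2m))` on `[0, 1]`.
This splits into the Bernoulli bound `(m+1) (1-q) q^m ≤ 1` and
`2m q^m (1-q) ≤ 1 - q^(2m)`, which says that the mean of `1, q, …, q^(2m-1)` is at least `q^m`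
(pair `q^i` with `q^(2m-1-i)` and use AM-GM).
-/

lemma add_one_mul_one_sub_mul_pow_le_one {q : ℝ} (hq0 : 0 ≤ q) (hq1 : q ≤ 1) (m : ℕ) :
    (m + 1) * (1 - q) * q ^ m ≤ 1 := by
  have bernoulli : 1 + m * (1 - q) ≤ (1 + (1 - q)) ^ m := one_add_mul_le_pow (by linarith) m
  calc (m + 1) * (1 - q) * q ^ m ≤ (1 + m * (1 - q)) * q ^ m := by gcongr; linarith
    _ ≤ (1 + (1 - q)) ^ m * q ^ m := by gcongr
    _ = (1 - (1 - q) ^ 2) ^ m := by rw [← mul_pow]; ring_nf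
    _ ≤ 1 := pow_le_one₀ (by nlinarith) (by nlinarith)

lemma two_mul_pow_le_pow_add_pow {q : ℝ} (hq0 : 0 ≤ q) (hq1 : q ≤ 1) {i j m : ℕ}
    (hij : i + j + 1 = 2 * m) :
    2 * q ^ m ≤ q ^ i + q ^ j := by
  have hprod : (q ^ m) ^ 2 ≤ q ^ i * q ^ j := by
    rw [← pow_mul, ← pow_add, mul_comm, ← hij, pow_succ]
    exact mul_le_of_le_one_right (by positivity) hq1
  nlinarith [sq_nonneg (q ^ i - q ^ j), pow_nonneg hq0 i, pow_nonneg hq0 j, pow_nonneg hq0 m]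

lemma two_mul_mul_pow_le_geom_sum {q : ℝ} (hq0 : 0 ≤ q) (hq1 : q ≤ 1) (m : ℕ) :
    2 * m * q ^ m ≤ ∑ i ∈ Finset.range (2 * m), q ^ i := by
  have hpairs : ∑ _i ∈ Finset.range (2 * m), 2 * q ^ m ≤
      ∑ i ∈ Finset.range (2 * m), (q ^ i + q ^ (2 * m - 1 - i)) :=
    Finset.sum_le_sum fun i hi ↦
      two_mul_pow_le_pow_add_pow hq0 hq1 (by rw [Finset.mem_range] at hi; omega)
  rw [Finset.sum_add_distrib, Finset.sum_range_reflect (fun i ↦ q ^ i), Finset.sum_const,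
    Finset.card_range, nsmul_eq_mul] at hpairs
  push_cast at hpairs
  linarith

lemma two_mul_mul_pow_mul_one_sub_le_one_sub_pow {q : ℝ} (hq0 : 0 ≤ q) (hq1 : q ≤ 1)
    (m : ℕ) :
    2 * m * q ^ m * (1 - q) ≤ 1 - q ^ (2 * m) := by
  rw [← geom_sum_mul_neg]
  exact mul_le_mul_of_nonneg_right (two_mul_mul_pow_le_geom_sum hq0 hq1 m) (by linarith)

lemma two_mul_add_one_sq_mul_one_sub_mul_pow_le {q : ℝ} (hq0 : 0 ≤ q) (hq1 : q ≤ 1)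
    (m : ℕ) :
    2 * (m + 1) ^ 2 * (1 - q) * q ^ m ≤ 2 + (m + 1) * (1 - q ^ (2 * m)) := by
  have hbernoulli := add_one_mul_one_sub_mul_pow_le_one hq0 hq1 m
  have hmean := mul_le_mul_of_nonneg_left (two_mul_mul_pow_mul_one_sub_le_one_sub_pow hq0 hq1 m)
    (by positivity : (0 : ℝ) ≤ m + 1)
  linarith

lemma two_mul_add_one_sq_mul_mul_one_sub_pow_le {m : ℕ} (hm : m ≠ 0) {u : ℝ} (hu0 : 0 ≤ u)
    (hu1 : u ≤ 1) :
    2 * (m + 1) ^ 2 * u * (1 - u) ^ m ≤ 2 + (m + 1) * (1 - (1 - 2 * u) ^ m) := by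
  set q := max u (1 - u) with hq
  have hq0 : 0 ≤ q := le_max_of_le_left hu0
  have hq1 : q ≤ 1 := max_le hu1 (by linarith)
  have hprod : u * (1 - u) ^ m ≤ (1 - q) * q ^ m := by
    obtain ⟨k, rfl⟩ := Nat.exists_eq_succ_of_ne_zero hm
    have hsymm : u * (1 - u) = (1 - q) * q := by
      rcases max_cases u (1 - u) with ⟨h, -⟩ | ⟨h, -⟩ <;> rw [hq, h] <;> ring
    calc u * (1 - u) ^ (k + 1) = u * (1 - u) * (1 - u) ^ k := by ring
      _ ≤ (1 - q) * q * q ^ k := by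
        rw [hsymm]; gcongr; exact le_max_right u (1 - u)
      _ = (1 - q) * q ^ (k + 1) := by ring
  have habs : |1 - 2 * u| ≤ q ^ 2 := by
    rw [abs_le]
    rcases max_cases u (1 - u) with ⟨h, hle⟩ | ⟨h, hlt⟩ <;> rw [hq, h] <;> constructor <;>
      nlinarith
  have hpow : (1 - 2 * u) ^ m ≤ q ^ (2 * m) :=
    calc (1 - 2 * u) ^ m ≤ |1 - 2 * u| ^ m := (le_abs_self _).trans (abs_pow _ m).le
      _ ≤ (q ^ 2) ^ m := pow_le_pow_left₀ (abs_nonneg _) habs m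
      _ = q ^ (2 * m) := (pow_mul q 2 m).symm
  calc 2 * (m + 1) ^ 2 * u * (1 - u) ^ m = 2 * (m + 1) ^ 2 * (u * (1 - u) ^ m) := by ring
    _ ≤ 2 * (m + 1) ^ 2 * ((1 - q) * q ^ m) := by gcongr
    _ = 2 * (m + 1) ^ 2 * (1 - q) * q ^ m := by ring
    _ ≤ 2 + (m + 1) * (1 - q ^ (2 * m)) := two_mul_add_one_sq_mul_one_sub_mul_pow_le hq0 hq1 m
    _ ≤ 2 + (m + 1) * (1 - (1 - 2 * u) ^ m) := by gcongr

lemma f_add_two (m : ℕ) (x : ℝ) :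
    f (m + 2) x = 2 * (m + 1) ^ 2 * sin x ^ 2 * (1 - sin x ^ 2) ^ m /
      (2 + (m + 1) * (1 - (1 - 2 * sin x ^ 2) ^ m)) := by
  have hcos : cos x ^ (2 * (m + 2) - 4) = (1 - sin x ^ 2) ^ m := by
    rw [show 2 * (m + 2) - 4 = 2 * m by omega, pow_mul, cos_sq']
  have hcos_two_mul : cos (2 * x) = 1 - 2 * sin x ^ 2 := by rw [cos_two_mul, cos_sq']; ring
  rw [f, hcos, hcos_two_mul, Nat.add_sub_cancel]
  push_cast
  have hm2 : (m : ℝ) + 2 ≠ 0 := by positivity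
  refine (congrArg₂ (· / ·) ?_ ?_).trans (mul_div_mul_left _ _ hm2) <;> ring

theorem stmt_5_general (N : ℕ) (hN : 3 ≤ N) (x : ℝ) :
    f N x ≤ 1 := by
  obtain ⟨m, rfl⟩ : ∃ m, N = m + 2 := ⟨N - 2, by omega⟩
  have hbound := two_mul_add_one_sq_mul_mul_one_sub_pow_le (m := m) (by omega)
    (sq_nonneg (sin x)) (sin_sq_le_one x)
  have hcos_sq : 0 ≤ 1 - sin x ^ 2 := by rw [← cos_sq']; positivity
  rw [f_add_two]
  exact div_le_one_of_le₀ hbound ((by positivity : (0 : ℝ) ≤ _).trans hbound)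

/-- For every N ≥ 3 and every x ∈ (0, π/2), f(N, x) ≤ 1. -/
theorem stmt_5 (N : ℕ) (hN : 3 ≤ N) (x : ℝ) (hx : x ∈ Ioo 0 (π / 2)) :
    f N x ≤ 1 :=
  stmt_5_general N hN x
end

section
/- Let h(x) = 2α⁴ e^{−4α² sin²(x)} sin²(α² sin(2x) + 1) for fixed α > 0, and let 1/(Δφ)² = h(χt) be the reciprocal error of the Kerr twist-untwist displacement protocol. At x = (π−2)/(4(α²+1)), as α → ∞ we have α²·sin(2x) + 1 → π/2 and 4α² sin²(x) → 0, so lim_{α→∞} h((π−2)/(4(α²+1)))/(2α⁴) = 1; hence the error (Δφ)² scales as 1/(2α⁴). -/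
open Real Filter

/-- For the Kerr twist-untwist protocol with h(x) = 2α⁴e^{−4α²sin²x}sin²(α²sin(2x)+1)
evaluated at x = (π−2)/(4(α²+1)): as α → ∞, 4α²sin²(x) → 0,
α²sin(2x) + 1 → π/2, and h(x)/(2α⁴) → 1, so the error scales as 1/(2α⁴). -/
theorem stmt_19 :
    Tendsto (fun α : ℝ =>
        4 * α ^ 2 * Real.sin ((π - 2) / (4 * (α ^ 2 + 1))) ^ 2)
      atTop (nhds 0) ∧
    Tendsto (fun α : ℝ =>
        α ^ 2 * Real.sin (2 * ((π - 2) / (4 * (α ^ 2 + 1)))) + 1)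
      atTop (nhds (π / 2)) ∧
    Tendsto (fun α : ℝ =>
        (2 * α ^ 4 * Real.exp (-(4 * α ^ 2 * Real.sin ((π - 2) / (4 * (α ^ 2 + 1))) ^ 2)) *
            Real.sin (α ^ 2 * Real.sin (2 * ((π - 2) / (4 * (α ^ 2 + 1)))) + 1) ^ 2) /
          (2 * α ^ 4))
      atTop (nhds 1) := by
  have hpi : (2:ℝ) < π := by linarith [Real.pi_gt_three]
  set u : ℝ → ℝ := fun α => (π - 2) / (4 * (α ^ 2 + 1)) with hu
  have hupos : ∀ α, 0 < u α := fun α => div_pos (by linarith) (by positivity)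
  -- denominator tendsto atTop
  have hsq : Tendsto (fun α : ℝ => α ^ 2 + 1) atTop atTop :=
    tendsto_atTop_add_const_right _ 1 (tendsto_pow_atTop two_ne_zero)
  have hden : Tendsto (fun α : ℝ => 4 * (α ^ 2 + 1)) atTop atTop :=
    hsq.const_mul_atTop (by norm_num)
  have hu0 : Tendsto u atTop (nhds 0) := tendsto_const_nhds.div_atTop hden
  -- fraction limit
  have hfrac : Tendsto (fun α : ℝ => α ^ 2 / (α ^ 2 + 1)) atTop (nhds 1) := by
    have heq : (fun α : ℝ => α ^ 2 / (α ^ 2 + 1)) = fun α => 1 - 1 / (α ^ 2 + 1) := by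
      funext α
      have h : (α:ℝ) ^ 2 + 1 ≠ 0 := by positivity
      field_simp
      ring
    rw [heq]
    have := (tendsto_const_nhds (x := (1:ℝ)) (f := atTop)).div_atTop hsq
    simpa using tendsto_const_nhds.sub this
  -- sin x / x → 1
  have hslope : Tendsto (fun y : ℝ => Real.sin y / y) (nhdsWithin 0 {x | x ≠ 0}) (nhds 1) := by
    have h := (hasDerivAt_sin 0)
    rw [Real.cos_zero] at h
    have := hasDerivAt_iff_tendsto_slope.mp h
    have h' : Tendsto (fun y : ℝ => Real.sin y / y) (nhdsWithin 0 {0}ᶜ) (nhds 1) := by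
      simpa [slope_fun_def_field, Real.sin_zero] using this
    exact h'
  -- Part 1
  have h1 : Tendsto (fun α : ℝ =>
      4 * α ^ 2 * Real.sin ((π - 2) / (4 * (α ^ 2 + 1))) ^ 2) atTop (nhds 0) := by
    have hupper : Tendsto (fun α : ℝ => (π - 2) ^ 2 / (4 * (α ^ 2 + 1))) atTop (nhds 0) :=
      tendsto_const_nhds.div_atTop hden
    refine tendsto_of_tendsto_of_tendsto_of_le_of_le tendsto_const_nhds hupper
      (fun α => by positivity) fun α => ?_
    have hub : u α ≤ π := by
      have h1 : u α ≤ (π - 2) / 4 := by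
        apply div_le_div_of_nonneg_left (by linarith) (by norm_num) (by nlinarith)
      nlinarith
    have hsin : Real.sin (u α) ≤ u α := le_of_lt (Real.sin_lt (hupos α))
    have hsinn : 0 ≤ Real.sin (u α) := Real.sin_nonneg_of_nonneg_of_le_pi (le_of_lt (hupos α)) hub
    have hs2 : Real.sin (u α) ^ 2 ≤ (u α) ^ 2 := by nlinarith
    have h3 : 4 * α ^ 2 * Real.sin (u α) ^ 2 ≤ 4 * α ^ 2 * (u α) ^ 2 := by nlinarith
    have h4 : 4 * α ^ 2 * (u α) ^ 2 ≤ (π - 2) ^ 2 / (4 * (α ^ 2 + 1)) := by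
      rw [hu]
      simp only []
      rw [div_pow]
      have he : 4 * α ^ 2 * ((π - 2) ^ 2 / (4 * (α ^ 2 + 1)) ^ 2) =
          4 * α ^ 2 * (π - 2) ^ 2 / (4 * (α ^ 2 + 1)) ^ 2 := by ring
      rw [he, div_le_div_iff₀ (by positivity) (by positivity)]
      nlinarith [sq_nonneg α, sq_nonneg (α^2), sq_nonneg (π - 2)]
    exact le_trans h3 h4
  -- Part 2 core
  have h2' : Tendsto (fun α : ℝ => α ^ 2 * Real.sin (2 * u α)) atTop (nhds ((π - 2) / 2)) := by
    have h2u : Tendsto (fun α : ℝ => 2 * u α) atTop (nhdsWithin 0 {x | x ≠ 0}) := by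
      apply tendsto_nhdsWithin_of_tendsto_nhds_of_eventually_within
      · simpa using hu0.const_mul 2
      · filter_upwards with α
        exact ne_of_gt (mul_pos two_pos (hupos α))
    have hsin2 : Tendsto (fun α : ℝ => Real.sin (2 * u α) / (2 * u α)) atTop (nhds 1) :=
      hslope.comp h2u
    have hlin : Tendsto (fun α : ℝ => α ^ 2 * (2 * u α)) atTop (nhds ((π - 2) / 2)) := by
      have heq : (fun α : ℝ => α ^ 2 * (2 * u α)) =
          fun α => (π - 2) / 2 * (α ^ 2 / (α ^ 2 + 1)) := by
        funext α
        rw [hu]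
        have h : (α:ℝ) ^ 2 + 1 ≠ 0 := by positivity
        field_simp
        ring
      rw [heq]
      simpa using hfrac.const_mul ((π - 2) / 2)
    have := hsin2.mul hlin
    rw [one_mul] at this
    refine this.congr fun α => ?_
    have h : (2 : ℝ) * u α ≠ 0 := ne_of_gt (mul_pos two_pos (hupos α))
    field_simp
    rw [div_eq_iff (ne_of_gt (hupos α))]
    ring
  have h2 : Tendsto (fun α : ℝ =>
      α ^ 2 * Real.sin (2 * ((π - 2) / (4 * (α ^ 2 + 1)))) + 1) atTop (nhds (π / 2)) := by
    have := h2'.add_const 1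
    have heq : (π - 2) / 2 + 1 = π / 2 := by ring
    rwa [heq] at this
  refine ⟨h1, h2, ?_⟩
  -- Part 3
  have hexp : Tendsto (fun α : ℝ =>
      Real.exp (-(4 * α ^ 2 * Real.sin ((π - 2) / (4 * (α ^ 2 + 1))) ^ 2))) atTop (nhds 1) := by
    have := (Real.continuous_exp.tendsto 0).comp (by simpa using h1.neg : Tendsto (fun α : ℝ =>
      -(4 * α ^ 2 * Real.sin ((π - 2) / (4 * (α ^ 2 + 1))) ^ 2)) atTop (nhds 0))
    simpa [Function.comp_def] using this
  have hsin : Tendsto (fun α : ℝ =>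
      Real.sin (α ^ 2 * Real.sin (2 * ((π - 2) / (4 * (α ^ 2 + 1)))) + 1) ^ 2) atTop (nhds 1) := by
    have := ((Real.continuous_sin.tendsto (π / 2)).comp h2).pow 2
    simpa using this
  have hprod := hexp.mul hsin
  rw [mul_one] at hprod
  refine hprod.congr' ?_
  filter_upwards [eventually_gt_atTop (0:ℝ)] with α hα
  have h : (2:ℝ) * α ^ 4 ≠ 0 := by positivity
  field_simp
end
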